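/- arXiv:2307.06941 — 3 statements merged into one kernel-verified Lean document; each statement's English description precedes it below -/
import Mathlib

section
/- The Shapley value of a player i equals the sum over all nonempty coalitions S containing i of Δ_S / |S|, where Δ_S are the Harsanyi dividends of the game. -/
open Finset

/-- The Shapley value of player `i`. -/
noncomputable def shapley {ι : Type*} [Fintype ι] [DecidableEq ι]
    (v : Finset ι → ℝ) (i : ι) : ℝ :=
  ∑ S ∈ (Finset.univ.erase i).powerset,
    ((Fintype.card ι : ℝ)⁻¹ * ((Fintype.card ι - 1).choose S.card : ℝ)⁻¹) *
      (v (insert i S) - v S)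

/-- The Harsanyi dividends of a game `v`, defined recursively by
`Δ_S = v(S) − Σ_{T ⊊ S, T ≠ ∅} Δ_T`. -/
noncomputable def dividend {ι : Type*} [DecidableEq ι]
    (v : Finset ι → ℝ) (S : Finset ι) : ℝ :=
  v S - ∑ T ∈ ((S.powerset.erase ∅).erase S).attach,
    dividend v T.1
termination_by S.card
decreasing_by
  have hT := T.2
  simp only [Finset.mem_erase, Finset.mem_powerset] at hT
  exact Finset.card_lt_card (lt_of_le_of_ne hT.2.2 hT.1)

/-!
Summing the dividends over the subsets of a coalition recovers its worth, so the marginal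
contribution `v (S ∪ {i}) - v S` is the sum of `Δ (R ∪ {i})` over `R ⊆ S`. Exchanging the two
sums, `Δ (R ∪ {i})` receives the total Shapley weight of the coalitions between `R` and
`F \ {i}`. With `r = |R|` and `d = |F \ {i}| - r` this is
`∑ₜ C(d, t) / ((r + d + 1) C(r + d, r + t))`, which equals `1 / (r + 1)` because
`C(d, t) / C(r + d, r + t) = C(r + t, r) / C(r + d, r)` and by the hockey-stick identity.
-/

section Dividends

variable {ι : Type*} [DecidableEq ι] (v : Finset ι → ℝ)

theorem dividend_eq_sub_sum (S : Finset ι) :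
    dividend v S = v S - ∑ T ∈ (S.powerset.erase ∅).erase S, dividend v T := by
  rw [dividend, sum_attach]

theorem dividend_empty : dividend v ∅ = v ∅ := by
  rw [dividend_eq_sub_sum]
  simp

variable {v}

theorem sum_powerset_dividend (hv : v ∅ = 0) (S : Finset ι) :
    ∑ T ∈ S.powerset, dividend v T = v S := by
  rw [← sum_erase_add _ _ (empty_mem_powerset S), dividend_empty, hv, add_zero]
  rcases S.eq_empty_or_nonempty with rfl | hS
  · simp [hv]
  · have hSmem : S ∈ S.powerset.erase ∅ :=
      mem_erase.2 ⟨hS.ne_empty, mem_powerset_self S⟩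
    rw [← sum_erase_add _ _ hSmem, dividend_eq_sub_sum v S]
    ring

theorem sub_eq_sum_dividend_insert (hv : v ∅ = 0) {i : ι} {S : Finset ι} (hi : i ∉ S) :
    v (insert i S) - v S = ∑ R ∈ S.powerset, dividend v (insert i R) := by
  rw [← sum_powerset_dividend hv, ← sum_powerset_dividend hv, sum_powerset_insert hi,
    add_sub_cancel_left]

end Dividends

noncomputable def shapleyWeight (n s : ℕ) : ℝ :=
  (n : ℝ)⁻¹ * ((n - 1).choose s : ℝ)⁻¹

theorem shapley_eq_sum_shapleyWeight {ι : Type*} [Fintype ι] [DecidableEq ι]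
    (v : Finset ι → ℝ) (i : ι) :
    shapley v i = ∑ S ∈ (univ.erase i).powerset,
      shapleyWeight (Fintype.card ι) #S * (v (insert i S) - v S) :=
  rfl

theorem choose_mul_shapleyWeight {r d t : ℕ} (ht : t ≤ d) :
    (d.choose t : ℝ) * shapleyWeight (r + d + 1) (r + t) =
      ((t + r).choose r : ℝ) * shapleyWeight (r + d + 1) r := by
  have hchoose : (r + d).choose (r + t) * (r + t).choose r = (r + d).choose r * d.choose t := by
    simpa using Nat.choose_mul (n := r + d) (Nat.le_add_right r t)
  have hpos : ((r + d).choose (r + t) : ℝ) ≠ 0 := by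
    exact_mod_cast (Nat.choose_pos (by omega)).ne'
  have hpos' : ((r + d).choose r : ℝ) ≠ 0 := by
    exact_mod_cast (Nat.choose_pos (by omega)).ne'
  simp only [shapleyWeight, Nat.add_sub_cancel]
  rw [add_comm t r]
  field_simp
  norm_cast
  rw [hchoose, mul_comm]

theorem sum_choose_mul_shapleyWeight (r d : ℕ) :
    ∑ t ∈ range (d + 1), (d.choose t : ℝ) * shapleyWeight (r + d + 1) (r + t) =
      ((r : ℝ) + 1)⁻¹ := by
  rw [sum_congr rfl fun t ht => choose_mul_shapleyWeight (Nat.lt_succ_iff.1 (mem_range.1 ht)),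
    ← sum_mul, ← Nat.cast_sum, Nat.sum_range_add_choose]
  have hpascal := Nat.add_one_mul_choose_eq (r + d) r
  have hpos : ((r + d).choose r : ℝ) ≠ 0 := by
    exact_mod_cast (Nat.choose_pos (by omega)).ne'
  simp only [shapleyWeight, Nat.add_sub_cancel]
  field_simp
  norm_cast
  rw [hpascal, add_comm d r]

theorem sum_Icc_shapleyWeight {α : Type*} [DecidableEq α] {R E : Finset α} (h : R ⊆ E) :
    ∑ S ∈ Icc R E, shapleyWeight (#E + 1) #S = ((#R : ℝ) + 1)⁻¹ := by
  have hdisj : ∀ T ∈ (E \ R).powerset, Disjoint R T := fun T hT =>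
    disjoint_sdiff.mono_right (mem_powerset.1 hT)
  have hinj : Set.InjOn (R ∪ ·) (E \ R).powerset := fun T₁ h₁ T₂ h₂ heq => by
    rw [← union_sdiff_cancel_left (hdisj T₁ h₁), ← union_sdiff_cancel_left (hdisj T₂ h₂)]
    exact congrArg (· \ R) heq
  rw [Icc_eq_image_powerset h, sum_image hinj,
    sum_congr rfl fun T hT => by rw [card_union_of_disjoint (hdisj T hT)],
    sum_powerset_apply_card (fun t => shapleyWeight (#E + 1) (#R + t)),
    ← card_sdiff_add_card_eq_card h, add_comm #(E \ R) #R]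
  simpa only [nsmul_eq_mul] using sum_choose_mul_shapleyWeight #R #(E \ R)

theorem sum_powerset_sum_powerset_comm {α β : Type*} [DecidableEq α] [AddCommMonoid β]
    (E : Finset α) (f : Finset α → Finset α → β) :
    ∑ S ∈ E.powerset, ∑ R ∈ S.powerset, f S R = ∑ R ∈ E.powerset, ∑ S ∈ Icc R E, f S R :=
  sum_comm' fun S R => by
    simp only [mem_powerset, mem_Icc]
    exact ⟨fun ⟨hSE, hRS⟩ => ⟨⟨hRS, hSE⟩, hRS.trans hSE⟩, fun ⟨⟨hRS, hSE⟩, _⟩ => ⟨hSE, hRS⟩⟩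

theorem sum_powerset_insert_filter_mem {α β : Type*} [DecidableEq α] [AddCommMonoid β]
    {a : α} {s : Finset α} (ha : a ∉ s) (f : Finset α → β) :
    ∑ S ∈ (insert a s).powerset with a ∈ S, f S = ∑ R ∈ s.powerset, f (insert a R) := by
  rw [sum_filter, sum_powerset_insert ha,
    sum_eq_zero fun R hR => if_neg (notMem_mono (mem_powerset.1 hR) ha), zero_add]
  exact sum_congr rfl fun R _ => if_pos (mem_insert_self a R)

/-- The Shapley value of player `i` equals the sum, over all nonempty coalitions
`S` containing `i`, of `Δ_S / |S|`. -/
theorem shapley_eq_sum_dividends {ι : Type*} [Fintype ι] [DecidableEq ι]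
    (v : Finset ι → ℝ) (hv : v ∅ = 0) (i : ι) :
    shapley v i =
      ∑ S ∈ (Finset.univ.powerset.erase ∅).filter (fun S => i ∈ S),
        dividend v S / S.card := by
  set E := (univ : Finset ι).erase i
  have hiE : i ∉ E := notMem_erase i univ
  have hcard : Fintype.card ι = #E + 1 := by rw [card_erase_add_one (mem_univ i), card_univ]
  calc shapley v i
      = ∑ S ∈ E.powerset, ∑ R ∈ S.powerset,
          shapleyWeight (#E + 1) #S * dividend v (insert i R) := by
        rw [shapley_eq_sum_shapleyWeight, hcard]
        refine sum_congr rfl fun S hS => ?_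
        rw [sub_eq_sum_dividend_insert hv (notMem_mono (mem_powerset.1 hS) hiE), mul_sum]
    _ = ∑ R ∈ E.powerset,
          (∑ S ∈ Icc R E, shapleyWeight (#E + 1) #S) * dividend v (insert i R) := by
        simp only [sum_powerset_sum_powerset_comm, sum_mul]
    _ = ∑ R ∈ E.powerset, dividend v (insert i R) / #(insert i R) := by
        refine sum_congr rfl fun R hR => ?_
        rw [sum_Icc_shapleyWeight (mem_powerset.1 hR),
          card_insert_of_notMem (notMem_mono (mem_powerset.1 hR) hiE), Nat.cast_succ,
          inv_mul_eq_div]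
    _ = _ := by
        rw [filter_erase, erase_eq_of_notMem (by simp), ← insert_erase (mem_univ i),
          sum_powerset_insert_filter_mem hiE]
end

section
/- Let x be a query instance with F(x) = 1 and x' a maximally sparse counterfactual with modified feature set C = {i : x_i ≠ x'_i}. Then in the single-reference game v(S) = F(⟨x_S, x'_{F\S}⟩), the Shapley value of each feature i ∈ C equals 1/|C| and the Shapley value of each feature i ∉ C equals 0. -/
/-!
Since `x` and `x'` agree off `C`, the blend on `S` equals the blend on `S ∩ C`, so by maximal
sparsity the game is `v S = 1` if `S` meets `C` and `0` otherwise. Features outside `C` are then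
null players. A feature `i ∈ C` has marginal contribution `1` exactly on the coalitions
`S ⊆ Cᶜ`; grouping these by size, with `n` features, `a = |Cᶜ|` and `|C| = c + 1`, its Shapley
value is `n⁻¹ ∑ₖ C(a,k) / C(a+c,k) = n⁻¹ (a+c+1)/(c+1) = 1/|C|`.
-/

open Finset

/-- `blend x x' S = ⟨x_S, x'_{F∖S}⟩`: the input taking `x`'s values on features
in `S` and `x'`'s values elsewhere. -/
def blend {m : ℕ} (x x' : Fin m → ℝ) (S : Finset (Fin m)) : Fin m → ℝ :=
  fun i => if i ∈ S then x i else x' i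

theorem Nat.cast_choose_succ_div_cast_choose_succ (a b j : ℕ) :
    ((a + 1).choose (j + 1) : ℝ) / (b + 1).choose (j + 1) =
      (a + 1) / (b + 1) * ((a.choose j : ℝ) / b.choose j) := by
  have cast_choose_succ (n : ℕ) : ((n + 1).choose (j + 1) : ℝ) = (n + 1) * n.choose j / (j + 1) := by
    rw [eq_div_iff (by positivity)]
    exact_mod_cast (Nat.add_one_mul_choose_eq n j).symm
  rw [cast_choose_succ, cast_choose_succ, div_div_div_cancel_right₀ (by positivity), mul_div_mul_comm]

theorem Nat.sum_range_cast_choose_div_cast_choose_add (a c : ℕ) :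
    ∑ k ∈ range (a + 1), (a.choose k : ℝ) / (a + c).choose k = (a + c + 1) / (c + 1) := by
  induction a with
  | zero => simp [div_self (by positivity : (c : ℝ) + 1 ≠ 0)]
  | succ a ih =>
    rw [sum_range_succ', add_right_comm a 1 c]
    simp_rw [Nat.cast_choose_succ_div_cast_choose_succ, ← mul_sum, ih]
    push_cast [Nat.choose_zero_right]
    field_simp
    ring

section Shapley

variable {ι : Type*} [Fintype ι] [DecidableEq ι]

theorem shapley_eq_zero_of_forall_insert_eq {v : Finset ι → ℝ} {i : ι}
    (h : ∀ S, v (insert i S) = v S) : shapley v i = 0 :=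
  sum_eq_zero fun S _ ↦ by rw [h, sub_self, mul_zero]

theorem shapley_not_disjoint_of_mem {C : Finset ι} {i : ι} (hi : i ∈ C) :
    shapley (fun S ↦ if Disjoint S C then 0 else 1) i = (#C : ℝ)⁻¹ := by
  set n := Fintype.card ι
  have hterm : ∀ S ∈ (univ.erase i).powerset,
      ((n : ℝ)⁻¹ * ((n - 1).choose #S : ℝ)⁻¹) *
          ((if Disjoint (insert i S) C then 0 else 1) - if Disjoint S C then 0 else 1) =
        if Disjoint S C then (n : ℝ)⁻¹ * ((n - 1).choose #S : ℝ)⁻¹ else 0 := by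
    intro S _
    by_cases h : Disjoint S C <;> simp [h, disjoint_insert_left, hi]
  have hfilter : {S ∈ (univ.erase i).powerset | Disjoint S C} = Cᶜ.powerset := by
    ext S
    simp only [mem_filter, mem_powerset, subset_erase, subset_univ, true_and,
      subset_compl_iff_disjoint_right]
    exact ⟨And.right, fun h ↦ ⟨fun hiS ↦ disjoint_left.mp h hiS hi, h⟩⟩
  obtain ⟨a, ha⟩ : ∃ a, #Cᶜ = a := ⟨_, rfl⟩
  obtain ⟨c, hc⟩ : ∃ c, #C = c + 1 := Nat.exists_eq_add_one.mpr (card_pos.mpr ⟨i, hi⟩)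
  have hn : n = a + c + 1 := by
    rw [← ha, card_compl, hc]
    have := card_le_univ C
    omega
  rw [shapley, sum_congr rfl hterm, ← sum_filter, hfilter,
    sum_powerset_apply_card (fun k ↦ (n : ℝ)⁻¹ * ((n - 1).choose k : ℝ)⁻¹), ha]
  have hsummand (k : ℕ) : a.choose k • ((n : ℝ)⁻¹ * ((n - 1).choose k : ℝ)⁻¹) =
      (n : ℝ)⁻¹ * ((a.choose k : ℝ) / (a + c).choose k) := by
    rw [nsmul_eq_mul, hn, Nat.add_sub_cancel, div_eq_mul_inv, mul_left_comm]
  simp_rw [hsummand, ← mul_sum, Nat.sum_range_cast_choose_div_cast_choose_add, hn, hc]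
  push_cast
  field_simp

end Shapley

theorem blend_empty {m : ℕ} (x x' : Fin m → ℝ) : blend x x' ∅ = x' := by
  funext i; simp [blend]

theorem blend_inter_filter_ne {m : ℕ} (x x' : Fin m → ℝ) (S : Finset (Fin m)) :
    blend x x' (S ∩ univ.filter (fun i ↦ x i ≠ x' i)) = blend x x' S := by
  funext i; by_cases h : x i = x' i <;> simp [blend, h]

theorem shapley_single_reference_maximally_sparse_general {m : ℕ}
    (F : (Fin m → ℝ) → ℝ) (hbin : ∀ z, F z = 0 ∨ F z = 1)
    (x x' : Fin m → ℝ) (hx' : F x' = 0)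
    (C : Finset (Fin m)) (hC : C = Finset.univ.filter (fun i => x i ≠ x' i))
    (hms : ∀ S : Finset (Fin m), S ⊆ C → S ≠ ∅ → F (blend x x' S) ≠ F x') :
    (∀ i ∈ C, shapley (fun S => F (blend x x' S)) i = (C.card : ℝ)⁻¹) ∧
    (∀ i ∉ C, shapley (fun S => F (blend x x' S)) i = 0) := by
  have hgame : (fun S ↦ F (blend x x' S)) = fun S ↦ if Disjoint S C then 0 else 1 := by
    funext S
    rw [← blend_inter_filter_ne, ← hC]
    split_ifs with hdisj
    · rw [disjoint_iff_inter_eq_empty.mp hdisj, blend_empty, hx']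
    · have hne := hms (S ∩ C) inter_subset_right (disjoint_iff_inter_eq_empty.not.mp hdisj)
      exact (hbin _).resolve_left (hx' ▸ hne)
  rw [hgame]
  refine ⟨fun i hi ↦ shapley_not_disjoint_of_mem hi, fun i hi ↦ ?_⟩
  exact shapley_eq_zero_of_forall_insert_eq fun S ↦ by simp [disjoint_insert_left, hi]

/-- Stmt 9: for a maximally sparse counterfactual `x'` with modified feature set
`C`, in the single-reference game `v(S) = F(⟨x_S, x'_{F∖S}⟩)` the Shapley value
of each feature in `C` is `1/|C|`, and `0` outside `C`. -/
theorem shapley_single_reference_maximally_sparse {m : ℕ}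
    (F : (Fin m → ℝ) → ℝ) (hbin : ∀ z, F z = 0 ∨ F z = 1)
    (x x' : Fin m → ℝ) (hx : F x = 1) (hx' : F x' = 0)
    (C : Finset (Fin m)) (hC : C = Finset.univ.filter (fun i => x i ≠ x' i))
    (hms : ∀ S : Finset (Fin m), S ⊆ C → S ≠ ∅ → F (blend x x' S) ≠ F x') :
    (∀ i ∈ C, shapley (fun S => F (blend x x' S)) i = (C.card : ℝ)⁻¹) ∧
    (∀ i ∉ C, shapley (fun S => F (blend x x' S)) i = 0) :=
  shapley_single_reference_maximally_sparse_general F hbin x x' hx' C hC hms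
end

section
/- If x' is a counterfactual for x whose modified feature set is a singleton C = {i}, then the Shapley value of feature i in the single-reference game v(S) = F(⟨x_S, x'_{F\S}⟩) equals F(x) − F(x') (i.e., equals 1 when F(x)=1, F(x')=0), and all other features have Shapley value 0. -/
open Finset

/-!
In the single-reference game the blended input only depends on whether `i ∈ S`, so
`v S` is `F x` or `F x'` accordingly. Hence every marginal contribution of `i` is
`F x - F x'` and every other feature is a null player; since the Shapley weights of
the coalitions avoiding a player sum to one, a constant marginal contribution is
that player's Shapley value.
-/

section Shapley

variable {ι : Type*} [Fintype ι] [DecidableEq ι]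

theorem sum_shapley_weights (i : ι) :
    ∑ S ∈ (univ.erase i).powerset,
      ((Fintype.card ι : ℝ)⁻¹ * ((Fintype.card ι - 1).choose S.card : ℝ)⁻¹) = 1 := by
  set n := Fintype.card ι
  have hn : 0 < n := Fintype.card_pos_iff.2 ⟨i⟩
  have hcard : (univ.erase i).card = n - 1 := by simp [n, card_erase_of_mem]
  rw [sum_powerset_apply_card (fun k => (n : ℝ)⁻¹ * ((n - 1).choose k : ℝ)⁻¹), hcard]
  calc ∑ k ∈ range (n - 1 + 1), (n - 1).choose k • ((n : ℝ)⁻¹ * ((n - 1).choose k : ℝ)⁻¹)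
      = ∑ _k ∈ range (n - 1 + 1), (n : ℝ)⁻¹ := by
        refine sum_congr rfl fun k hk => ?_
        have hchoose : ((n - 1).choose k : ℝ) ≠ 0 :=
          Nat.cast_ne_zero.2 (Nat.choose_pos (Nat.lt_succ_iff.1 (mem_range.1 hk))).ne'
        rw [nsmul_eq_mul, mul_left_comm, mul_inv_cancel₀ hchoose, mul_one]
    _ = 1 := by
        rw [sum_const, card_range, Nat.sub_add_cancel hn, nsmul_eq_mul]
        exact mul_inv_cancel₀ (Nat.cast_ne_zero.2 hn.ne')

theorem shapley_eq_of_marginal_eq {v : Finset ι → ℝ} {i : ι} {c : ℝ}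
    (h : ∀ S, i ∉ S → v (insert i S) - v S = c) : shapley v i = c := by
  calc shapley v i
      = ∑ S ∈ (univ.erase i).powerset,
          ((Fintype.card ι : ℝ)⁻¹ * ((Fintype.card ι - 1).choose S.card : ℝ)⁻¹) * c := by
        refine sum_congr rfl fun S hS => ?_
        rw [h S fun hiS => (mem_erase.1 (mem_powerset.1 hS hiS)).1 rfl]
    _ = c := by rw [← sum_mul, sum_shapley_weights, one_mul]

end Shapley

theorem blend_eq_ite {m : ℕ} {x x' : Fin m → ℝ} {i : Fin m}
    (hothers : ∀ j, j ≠ i → x j = x' j) (S : Finset (Fin m)) :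
    blend x x' S = if i ∈ S then x else x' := by
  funext j
  by_cases hj : j = i
  · subst hj
    split_ifs <;> simp [blend, *]
  · split_ifs <;> simp [blend, hothers j hj]

theorem shapley_singleton_counterfactual_general {m : ℕ}
    (F : (Fin m → ℝ) → ℝ)
    (x x' : Fin m → ℝ)
    (i : Fin m) (hothers : ∀ j, j ≠ i → x j = x' j) :
    shapley (fun S => F (blend x x' S)) i = F x - F x' ∧
    ∀ j, j ≠ i → shapley (fun S => F (blend x x' S)) j = 0 := by
  have hv : ∀ S, F (blend x x' S) = if i ∈ S then F x else F x' := fun S => by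
    rw [blend_eq_ite hothers, apply_ite F]
  refine ⟨shapley_eq_of_marginal_eq fun S hiS => ?_,
    fun j hj => shapley_eq_of_marginal_eq fun S _ => ?_⟩
  · simp [hv, hiS]
  · simp [hv, Ne.symm hj]

/-- Stmt 14: if the counterfactual `x'` differs from `x` in exactly one feature
`i`, then in the single-reference game `v(S) = F(⟨x_S, x'_{F∖S}⟩)` the Shapley
value of `i` is `F(x) − F(x')` and all other features get `0`. -/
theorem shapley_singleton_counterfactual {m : ℕ}
    (F : (Fin m → ℝ) → ℝ) (hbin : ∀ z, F z = 0 ∨ F z = 1)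
    (x x' : Fin m → ℝ) (hx : F x = 1) (hx' : F x' = 0)
    (i : Fin m) (hi : x i ≠ x' i) (hothers : ∀ j, j ≠ i → x j = x' j) :
    shapley (fun S => F (blend x x' S)) i = F x - F x' ∧
    ∀ j, j ≠ i → shapley (fun S => F (blend x x' S)) j = 0 :=
  shapley_singleton_counterfactual_general F x x' i hothers
end
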